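/- For every integer k ≥ 2, every total forcing set S of the diamond-necklace N_k contains at least two vertices from each diamond D_i (1 ≤ i ≤ k); consequently every total forcing set of N_k has cardinality at least 2k. -/
import Mathlib


/-- A set `T` of (colored) vertices is closed under the forcing rule: whenever a colored
vertex `v ∈ T` has the property that all of its neighbors outside `T` are equal to `w`
(i.e. `w` is its unique non-colored neighbor, if `w ∉ T`), then `w ∈ T`. -/
def ForcingClosed {V : Type*} (G : SimpleGraph V) (T : Set V) : Prop :=
  ∀ v ∈ T, ∀ w, G.Adj v w → (∀ u, G.Adj v u → u ∉ T → u = w) → w ∈ T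

/-- `S` is a (zero) forcing set of `G`: iterating the forcing process starting from `S`
colors all vertices; equivalently, every forcing-closed superset of `S` is everything. -/
def IsForcingSet {V : Type*} (G : SimpleGraph V) (S : Set V) : Prop :=
  ∀ T : Set V, S ⊆ T → ForcingClosed G T → ∀ v, v ∈ T

/-- `S` is a total forcing set of `G`: a forcing set whose induced subgraph has no
isolated vertex. -/
def IsTotalForcingSet {V : Type*} (G : SimpleGraph V) (S : Set V) : Prop :=
  IsForcingSet G S ∧ ∀ v ∈ S, ∃ w ∈ S, G.Adj v w

/-- The forcing number `F(G)`: minimum cardinality of a forcing set. -/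
noncomputable def forcingNumber {V : Type*} (G : SimpleGraph V) : ℕ :=
  sInf {n : ℕ | ∃ S : Set V, IsForcingSet G S ∧ S.ncard = n}

/-- The total forcing number `F_t(G)`: minimum cardinality of a total forcing set. -/
noncomputable def totalForcingNumber {V : Type*} (G : SimpleGraph V) : ℕ :=
  sInf {n : ℕ | ∃ S : Set V, IsTotalForcingSet G S ∧ S.ncard = n}

/-- The diamond-necklace `N_k`.  Its vertices are pairs `(i, j)` with `i : Fin k`
indexing the diamond and `j : Fin 4` the position inside diamond `D_i`, where
`j = 0, 1, 2, 3` correspond to the vertices `a_i, b_i, c_i, d_i` respectively and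
`a_i b_i` is the missing edge of the diamond.  Two vertices in the same diamond are
adjacent unless they are `a_i` and `b_i`, and in addition `a_i` is joined to `b_{i+1}`
(indices modulo `k`). -/
def diamondNecklace (k : ℕ) : SimpleGraph (Fin k × Fin 4) :=
  SimpleGraph.fromRel (fun p q =>
    (p.1 = q.1 ∧ ¬ ((p.2 = 0 ∧ q.2 = 1) ∨ (p.2 = 1 ∧ q.2 = 0))) ∨
    ((q.1 : ℕ) = ((p.1 : ℕ) + 1) % k ∧ p.2 = 0 ∧ q.2 = 1))

lemma dn_adj {k : ℕ} (i : Fin k) (j j' : Fin 4)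
    (h : ¬((j = 0 ∧ j' = 1) ∨ (j = 1 ∧ j' = 0))) (hne : j ≠ j') :
    (diamondNecklace k).Adj (i, j) (i, j') := by
  rw [diamondNecklace, SimpleGraph.fromRel_adj]
  exact ⟨fun he => hne (congrArg Prod.snd he), Or.inl (Or.inl ⟨rfl, h⟩)⟩

lemma dn_adj_fst {k : ℕ} (i : Fin k) (j : Fin 4) (h0 : j ≠ 0) (h1 : j ≠ 1)
    (q : Fin k × Fin 4) (h : (diamondNecklace k).Adj (i, j) q) : q.1 = i := by
  rw [diamondNecklace, SimpleGraph.fromRel_adj] at h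
  obtain ⟨-, h | h⟩ := h
  · rcases h with ⟨hh, -⟩ | ⟨-, hh, -⟩
    · exact hh.symm
    · exact absurd hh h0
  · rcases h with ⟨hh, -⟩ | ⟨-, -, hh⟩
    · exact hh
    · exact absurd hh h1

/-- For every `k ≥ 2`, every total forcing set `S` of `N_k` contains at least two
vertices from each diamond `D_i`; consequently `|S| ≥ 2k`. -/
theorem totalForcingSet_diamondNecklace_lower_bound (k : ℕ) (hk : 2 ≤ k)
    (S : Set (Fin k × Fin 4)) (hS : IsTotalForcingSet (diamondNecklace k) S) :
    (∀ i : Fin k, 2 ≤ (S ∩ {p : Fin k × Fin 4 | p.1 = i}).ncard) ∧ 2 * k ≤ S.ncard := by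
  classical
  obtain ⟨hforce, htotal⟩ := hS
  -- Step 1: each diamond contributes c_i or d_i to S.
  have key : ∀ i : Fin k, (i, (2 : Fin 4)) ∈ S ∨ (i, (3 : Fin 4)) ∈ S := by
    intro i
    by_contra hcon
    push_neg at hcon
    set T : Set (Fin k × Fin 4) := {p | p ≠ (i, 2) ∧ p ≠ (i, 3)} with hT
    have hST : S ⊆ T := by
      intro p hp
      exact ⟨fun h => hcon.1 (h ▸ hp), fun h => hcon.2 (h ▸ hp)⟩
    have hclosed : ForcingClosed (diamondNecklace k) T := by
      intro v hv w hadj hall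
      by_contra hw
      have hw2 : w = (i, (2 : Fin 4)) ∨ w = (i, (3 : Fin 4)) := by
        by_contra hcc
        push_neg at hcc
        exact hw ⟨hcc.1, hcc.2⟩
      obtain ⟨v1, v2⟩ := v
      -- in both cases, v lies in diamond i with v2 ∈ {0,1}; the other of c_i,d_i
      -- is an uncolored neighbor of v distinct from w
      rcases hw2 with rfl | rfl
      · have hv1 : v1 = i := by
          have := dn_adj_fst i 2 (by decide) (by decide) (v1, v2) hadj.symm
          exact this
        subst hv1
        have hv2 : v2 ≠ 2 ∧ v2 ≠ 3 := by
          constructor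
          · intro h; exact hv.1 (by rw [h])
          · intro h; exact hv.2 (by rw [h])
        have hadj3 : (diamondNecklace k).Adj (v1, v2) (v1, (3 : Fin 4)) := by
          apply dn_adj
          · rintro (⟨-, h⟩ | ⟨-, h⟩) <;> exact absurd h (by decide)
          · exact hv2.2
        have h3T : (v1, (3 : Fin 4)) ∉ T := by
          intro h; exact h.2 rfl
        have := hall _ hadj3 h3T
        have : ((3 : Fin 4)) = (2 : Fin 4) := congrArg Prod.snd this
        exact absurd this (by decide)
      · have hv1 : v1 = i := by
          exact dn_adj_fst i 3 (by decide) (by decide) (v1, v2) hadj.symm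
        subst hv1
        have hv2 : v2 ≠ 2 ∧ v2 ≠ 3 := by
          constructor
          · intro h; exact hv.1 (by rw [h])
          · intro h; exact hv.2 (by rw [h])
        have hadj2 : (diamondNecklace k).Adj (v1, v2) (v1, (2 : Fin 4)) := by
          apply dn_adj
          · rintro (⟨-, h⟩ | ⟨-, h⟩) <;> exact absurd h (by decide)
          · exact hv2.1
        have h2T : (v1, (2 : Fin 4)) ∉ T := by
          intro h; exact h.1 rfl
        have := hall _ hadj2 h2T
        have : ((2 : Fin 4)) = (3 : Fin 4) := congrArg Prod.snd this
        exact absurd this (by decide)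
    have := hforce T hST hclosed (i, 2)
    exact this.1 rfl
  -- Step 2: each diamond contributes at least 2 vertices.
  have two_le : ∀ i : Fin k, 2 ≤ (S ∩ {p : Fin k × Fin 4 | p.1 = i}).ncard := by
    intro i
    -- pick x ∈ S in diamond i with x.2 ∈ {2,3}
    obtain ⟨x, hxS, hx1, hx0, hx1'⟩ :
        ∃ x, x ∈ S ∧ x.1 = i ∧ x.2 ≠ 0 ∧ x.2 ≠ 1 := by
      rcases key i with h | h
      · exact ⟨(i, 2), h, rfl, (by decide : (2:Fin 4) ≠ 0), (by decide : (2:Fin 4) ≠ 1)⟩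
      · exact ⟨(i, 3), h, rfl, (by decide : (3:Fin 4) ≠ 0), (by decide : (3:Fin 4) ≠ 1)⟩
    obtain ⟨w, hwS, hadj⟩ := htotal x hxS
    have hw1 : w.1 = i := by
      obtain ⟨x1, x2⟩ := x
      exact dn_adj_fst i x2 hx0 hx1' w (by rwa [← hx1])
    have hne : x ≠ w := hadj.ne
    rw [show (2 : ℕ) = 1 + 1 by rfl]
    rw [Nat.add_one_le_iff]
    rw [Set.one_lt_ncard (Set.toFinite _)]
    exact ⟨x, ⟨hxS, hx1⟩, w, ⟨hwS, hw1⟩, hne⟩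
  refine ⟨two_le, ?_⟩
  -- Step 3: sum the fiberwise bounds
  have hcard : S.ncard = ∑ i : Fin k,
      (S.toFinset.filter (fun p => p.1 = i)).card := by
    rw [Set.ncard_eq_toFinset_card']
    exact Finset.card_eq_sum_card_fiberwise (fun x _ => Finset.mem_univ x.1)
  have hfib : ∀ i : Fin k,
      (S ∩ {p : Fin k × Fin 4 | p.1 = i}).ncard
        = (S.toFinset.filter (fun p => p.1 = i)).card := by
    intro i
    rw [Set.ncard_eq_toFinset_card']
    congr 1
    ext p
    simp [Set.mem_toFinset]
  calc 2 * k = ∑ _i : Fin k, 2 := by simp [mul_comm]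
    _ ≤ ∑ i : Fin k, (S.toFinset.filter (fun p => p.1 = i)).card := by
        apply Finset.sum_le_sum
        intro i _
        rw [← hfib i]; exact two_le i
    _ = S.ncard := hcard.symm
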